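/- arXiv:2202.09563 — 2 statements merged into one kernel-verified Lean document; each statement's English description precedes it below -/
import Mathlib

section
/- Let G be a finite group, N a solvable normal subgroup of G, and x ∈ G. Then Sol_G(x) is a union of cosets of N, and the image of Sol_G(x) in G/N equals Sol_{G/N}(xN); in particular |Sol_{G/N}(xN)| = |Sol_G(x)|/|N|. -/
/-!
Whether `⟨x, y⟩` is solvable can be read off modulo a solvable normal subgroup `N`: the image
`⟨xN, yN⟩` of a solvable group is solvable, and conversely `⟨x, y⟩` is an extension of
`⟨xN, yN⟩` by `⟨x, y⟩ ∩ N`, which is solvable as a subgroup of `N`. So `Sol x` is the full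
preimage of `Sol (xN)`, and each fibre of `G → G ⧸ N` has `|N|` elements.
-/

def Sol {G : Type*} [Group G] (x : G) : Set G :=
  {y | IsSolvable ↥(Subgroup.closure {x, y})}

section

variable {G G' : Type*} [Group G] [Group G']

theorem MonoidHom.isSolvable_of_isSolvable_ker_range (f : G →* G') [Group.IsSolvable f.ker]
    [Group.IsSolvable f.range] : Group.IsSolvable G :=
  Group.isSolvable_of_ker_le_range f.ker.subtype f.rangeRestrict
    (by rw [MonoidHom.ker_rangeRestrict, Subgroup.range_subtype])

theorem Subgroup.isSolvable_of_isSolvable_map (f : G →* G') [Group.IsSolvable f.ker]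
    (H : Subgroup G) (hH : Group.IsSolvable (H.map f)) : Group.IsSolvable H := by
  have : Group.IsSolvable (f.domRestrict H).ker := by
    let toKer : (f.domRestrict H).ker →* f.ker :=
      (H.subtype.comp (f.domRestrict H).ker.subtype).codRestrict f.ker fun z => z.2
    exact Group.isSolvable_of_isSolvable_injective (f := toKer) fun _ _ h =>
      Subtype.ext <| Subtype.ext <| congrArg (fun z : f.ker => (z : G)) h
  have : Group.IsSolvable (f.domRestrict H).range := by rwa [MonoidHom.domRestrict_range]
  exact (f.domRestrict H).isSolvable_of_isSolvable_ker_range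

theorem Subgroup.map_closure_pair (f : G →* G') (x y : G) :
    (closure {x, y}).map f = closure {f x, f y} := by
  rw [MonoidHom.map_closure, Set.image_pair]

theorem map_mem_Sol_iff (f : G →* G') [Group.IsSolvable f.ker] {x y : G} :
    f y ∈ Sol (f x) ↔ y ∈ Sol x := by
  change Group.IsSolvable (Subgroup.closure {f x, f y}) ↔
    Group.IsSolvable (Subgroup.closure {x, y})
  rw [← Subgroup.map_closure_pair]
  exact ⟨(Subgroup.closure {x, y}).isSolvable_of_isSolvable_map f,
    fun _ => Group.isSolvable_of_surjective (f.subgroupMap_surjective _)⟩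

theorem QuotientGroup.preimage_mk_Sol (N : Subgroup G) [N.Normal] [Group.IsSolvable N] (x : G) :
    QuotientGroup.mk ⁻¹' Sol (x : G ⧸ N) = Sol x := by
  have : Group.IsSolvable (mk' N).ker := by rwa [ker_mk']
  ext y
  exact map_mem_Sol_iff (mk' N)

end

theorem stmt4 {G : Type*} [Group G] [Finite G] (N : Subgroup G) [N.Normal]
    (hN : IsSolvable N) (x : G) :
    (∀ y ∈ Sol x, ∀ n ∈ N, y * n ∈ Sol x) ∧
    (QuotientGroup.mk '' Sol x = Sol (QuotientGroup.mk x : G ⧸ N)) ∧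
    Nat.card (Sol (QuotientGroup.mk x : G ⧸ N)) = Nat.card (Sol x) / Nat.card N := by
  have : Group.IsSolvable N := hN
  rw [← QuotientGroup.preimage_mk_Sol N x]
  refine ⟨fun y hy n hn => ?_, ?_, ?_⟩
  · rwa [Set.mem_preimage, QuotientGroup.mk_mul_of_mem y hn]
  · exact Set.image_preimage_eq _ QuotientGroup.mk_surjective
  · rw [QuotientGroup.card_preimage_mk, Nat.mul_div_cancel_left _ Nat.card_pos]
end

section
/- Let G be a finite insoluble group and x ∈ G. Then |Sol_G(x)| ≠ p² for every prime p. -/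
/-!
Suppose `|Sol x| = p²`. Every soluble subgroup containing `x` lies in `Sol x`, and so does the
normalizer of such a subgroup; `Sol x` is a union of cosets of `⟨x⟩`, so `x` is a `p`-element, and
`x ≠ 1` since `Sol 1 = G`. A Sylow `p`-subgroup `P ∋ x` is soluble, so `|P|` is `p` or `p²`.

If `|P| = p`, then for `y ∈ Sol x` the soluble group `⟨x, y⟩ ⊆ Sol x` has order at most `p²`, so
`P = ⟨x⟩` has index less than `p` in it and is normal there. Hence `Sol x = N_G(P)` is a subgroup of
order `p²`, contradicting `|P| = p`.

If `|P| = p²`, then `Sol x = P` contains `N_G(P)`, so the abelian group `P` is self-normalizing and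
Burnside's transfer theorem gives a normal `p`-complement `K`. By the Frattini argument each Sylow
subgroup `Q` of `K` is normalized by a conjugate `P^g`, and then `Q ⊆ Sol (x^g) = P^g` forces
`Q = 1`. So `K = 1` and `G = P` is soluble.
-/

open Subgroup

section Solubilizer

variable {G : Type*} [Group G]

instance isSolvable_of_isMulCommutative [IsMulCommutative G] : Group.IsSolvable G :=
  Group.isSolvable_of_comm mul_comm'

theorem mem_sol_comm {x y : G} : y ∈ Sol x ↔ x ∈ Sol y := by
  change Group.IsSolvable (closure {x, y}) ↔ Group.IsSolvable (closure {y, x})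
  rw [Set.pair_comm]

theorem coe_subset_sol {H : Subgroup G} [Group.IsSolvable H] {x : G} (hx : x ∈ H) :
    (H : Set G) ⊆ Sol x := fun _ hy ↦
  Group.isSolvable_of_isSolvable_injective
    (inclusion_injective ((closure_le _).mpr (Set.pair_subset hx hy)))

theorem sol_one : Sol (1 : G) = Set.univ :=
  Set.eq_univ_of_forall fun y ↦ mem_sol_comm.mpr (coe_subset_sol (mem_zpowers y) (one_mem _))

theorem mul_mem_sol {x y h : G} (hy : y ∈ Sol x) (hh : h ∈ zpowers x) : y * h ∈ Sol x :=
  have : Group.IsSolvable (closure {x, y}) := hy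
  have hx : x ∈ closure {x, y} := subset_closure (by simp)
  coe_subset_sol hx (mul_mem (subset_closure (by simp)) (zpowers_le.mpr hx hh))

theorem orderOf_dvd_card_sol [Finite G] (x : G) : orderOf x ∣ Nat.card (Sol x) := by
  set T := (QuotientGroup.mk : G → G ⧸ zpowers x) '' Sol x
  have hT : QuotientGroup.mk ⁻¹' T = Sol x := by
    refine Set.Subset.antisymm ?_ (Set.subset_preimage_image _ _)
    rintro y ⟨s, hs, hsy⟩
    simpa using mul_mem_sol hs (QuotientGroup.eq.mp hsy)
  rw [← hT, QuotientGroup.card_preimage_mk, Nat.card_zpowers]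
  exact dvd_mul_right _ _

theorem map_mem_sol_map_iff {G' : Type*} [Group G'] (e : G ≃* G') {x y : G} :
    e y ∈ Sol (e x) ↔ y ∈ Sol x := by
  have h : closure {e x, e y} = (closure {x, y}).map (e : G →* G') := by
    rw [MonoidHom.map_closure, Set.image_pair]; rfl
  change Group.IsSolvable (closure {e x, e y}) ↔ Group.IsSolvable (closure {x, y})
  rw [h]
  let f := equivMapOfInjective (closure {x, y}) (e : G →* G') e.injective
  exact ⟨fun _ ↦ Group.isSolvable_of_isSolvable_injective (f := f.toMonoidHom) f.injective,
    fun _ ↦ Group.isSolvable_of_isSolvable_injective (f := f.symm.toMonoidHom) f.symm.injective⟩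

theorem sol_map {G' : Type*} [Group G'] (e : G ≃* G') (x : G) : Sol (e x) = e '' Sol x := by
  ext y
  obtain ⟨y, rfl⟩ := e.surjective y
  rw [e.injective.mem_set_image, map_mem_sol_map_iff]

theorem isSolvable_sup_of_le_normalizer {H N : Subgroup G} [Group.IsSolvable H]
    [Group.IsSolvable N] (hHN : H ≤ normalizer (N : Set G)) : Group.IsSolvable ↥(H ⊔ N) := by
  have := normal_subgroupOf_of_le_normalizer hHN
  have := normal_subgroupOf_sup_of_le_normalizer hHN
  have : Group.IsSolvable (N.subgroupOf (H ⊔ N)) :=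
    Group.isSolvable_of_isSolvable_injective
      (f := (subgroupOfEquivOfLe le_sup_right).toMonoidHom) (MulEquiv.injective _)
  have : Group.IsSolvable (↥(H ⊔ N) ⧸ N.subgroupOf (H ⊔ N)) :=
    Group.isSolvable_of_surjective
      (f := (QuotientGroup.quotientInfEquivProdNormalizerQuotient H N hHN).toMonoidHom)
      (MulEquiv.surjective _)
  exact (Group.isSolvable_iff_subgroup_quotient (N.subgroupOf (H ⊔ N))).mpr ⟨‹_›, ‹_›⟩

theorem mem_sol_of_mem_normalizer {A : Subgroup G} [Group.IsSolvable A] {x n : G} (hx : x ∈ A)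
    (hn : n ∈ normalizer (A : Set G)) : n ∈ Sol x :=
  have := isSolvable_sup_of_le_normalizer (zpowers_le.mpr hn)
  coe_subset_sol (mem_sup_right hx) (mem_sup_left (mem_zpowers n))

theorem card_le_card_sol [Finite G] {H : Subgroup G} [Group.IsSolvable H] {x : G} (hx : x ∈ H) :
    Nat.card H ≤ Nat.card (Sol x) :=
  Nat.card_mono (Set.toFinite _) (coe_subset_sol hx)

end Solubilizer

section Sylow

variable {G : Type*} [Group G] [Finite G] {p : ℕ} [Fact p.Prime]

instance Sylow.isSolvable (P : Sylow p G) : Group.IsSolvable P :=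
  have := P.isPGroup'.isNilpotent
  inferInstance

theorem Sylow.normal_of_index_lt (P : Sylow p G) (h : (P : Subgroup G).index < p) :
    (P : Subgroup G).Normal := by
  have hlt : Nat.card (Sylow p G) < p :=
    (Nat.le_of_dvd (Nat.pos_of_ne_zero index_ne_zero_of_finite) P.card_dvd_index).trans_lt h
  have : Subsingleton (Sylow p G) := (Nat.card_eq_one_iff_unique.mp
    ((card_sylow_modEq_one p G).eq_of_lt_of_lt hlt (Fact.out : p.Prime).one_lt)).1
  exact P.normal_of_subsingleton

theorem Sylow.exists_le_normalizer_map {q : ℕ} [Fact q.Prime] {K : Subgroup G} [K.Normal]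
    (hK : ¬ p ∣ Nat.card K) (Q : Sylow q K) :
    ∃ P : Sylow p G, (P : Subgroup G) ≤ normalizer (Q.map K.subtype : Set G) := by
  set N := normalizer (Q.map K.subtype : Set G)
  -- Frattini: `N ⊔ K = G`, so `[N : N ⊓ K] = [G : K]` contains the full `p`-part of `|G|`.
  have hpK : Nat.Coprime (p ^ (Nat.card G).factorization p) (Nat.card K) :=
    Nat.Coprime.pow_left _ ((Nat.Prime.coprime_iff_not_dvd Fact.out).mpr hK)
  have hindex : K.relIndex N = K.index := by
    rw [← relIndex_sup_right, Sylow.normalizer_sup_eq_top Q, relIndex_top_right]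
  have hdvd : p ^ (Nat.card G).factorization p ∣ Nat.card N :=
    (hpK.dvd_of_dvd_mul_left (K.card_mul_index ▸ Nat.ordProj_dvd _ _)).trans
      (hindex ▸ K.relIndex_dvd_card N)
  obtain ⟨R, hR⟩ := Sylow.exists_subgroup_card_pow_prime p hdvd
  refine ⟨Sylow.ofCard (R.map N.subtype) ?_, map_subtype_le R⟩
  rw [card_map_of_injective N.subtype_injective, hR]

theorem eq_bot_of_forall_le_sylow {K : Subgroup G} [K.Normal] (hK : ¬ p ∣ Nat.card K)
    (h : ∀ (P : Sylow p G) (Q : Subgroup G), Group.IsSolvable Q →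
      (P : Subgroup G) ≤ normalizer (Q : Set G) → Q ≤ P) :
    K = ⊥ := by
  by_contra hK1
  obtain ⟨q, hq, hqK⟩ := Nat.exists_prime_and_dvd (mt card_eq_one.mp hK1)
  have := Fact.mk hq
  have hqp : q ≠ p := by rintro rfl; exact hK hqK
  obtain ⟨Q⟩ := (inferInstance : Nonempty (Sylow q K))
  obtain ⟨P, hP⟩ := Sylow.exists_le_normalizer_map hK Q
  have hQ : IsPGroup q (Q.map K.subtype) := Q.isPGroup'.map _
  have := hQ.isNilpotent
  have hbot : Q.map K.subtype = ⊥ :=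
    (IsPGroup.disjoint_of_ne q p hqp _ _ hQ P.isPGroup').eq_bot_of_le (h P _ inferInstance hP)
  have hQcard : Nat.card (Q : Subgroup K) = 1 := by
    rw [← card_map_of_injective K.subtype_injective, hbot, card_bot]
  exact hq.one_lt.ne' (Nat.dvd_one.mp (hQcard ▸ Q.dvd_card_of_dvd_card hqK))

theorem Sylow.le_of_le_normalizer_of_sol_subset {P : Sylow p G} {x : G} (hx : x ∈ P)
    (hSol : Sol x ⊆ P) (P' : Sylow p G) (Q : Subgroup G) [Group.IsSolvable Q]
    (hQ : (P' : Subgroup G) ≤ normalizer (Q : Set G)) : Q ≤ P' := by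
  obtain ⟨g, rfl⟩ := MulAction.exists_smul_eq G P P'
  have hgx : MulAut.conj g x ∈ g • P := by
    rw [← SetLike.mem_coe, Sylow.coe_smul]
    exact Set.smul_mem_smul_set hx
  have hSol' : Sol (MulAut.conj g x) ⊆ ((g • P : Sylow p G) : Set G) := by
    rw [sol_map, Sylow.coe_smul, ← Set.image_smul]
    exact Set.image_mono hSol
  exact fun z hz ↦ hSol' (mem_sol_comm.mp (mem_sol_of_mem_normalizer hz (hQ hgx)))

theorem Sylow.eq_top_of_sol_subset (P : Sylow p G) [IsMulCommutative (P : Subgroup G)] {x : G}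
    (hx : x ∈ P) (hSol : Sol x ⊆ P) : (P : Subgroup G) = ⊤ := by
  have hN : normalizer (P : Set G) ≤ centralizer (P : Set G) := fun n hn ↦
    have hnP : n ∈ P := hSol (mem_sol_of_mem_normalizer hx hn)
    mem_centralizer_iff.mpr fun m hm ↦
      congrArg Subtype.val (mul_comm' (⟨m, hm⟩ : (P : Subgroup G)) ⟨n, hnP⟩)
  have hK := MonoidHom.ker_transferSylow_isComplement' P hN
  rwa [eq_bot_of_forall_le_sylow (MonoidHom.not_dvd_card_ker_transferSylow P hN)
    (fun P' Q _ hQ ↦ P.le_of_le_normalizer_of_sol_subset hx hSol P' Q hQ),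
    isComplement'_bot_left] at hK

theorem Sylow.sol_subset_normalizer (P : Sylow p G) (hP : Nat.card P = p) {x : G} (hx : x ∈ P)
    (hx1 : x ≠ 1) (hSol : Nat.card (Sol x) ≤ p ^ 2) : Sol x ⊆ normalizer (P : Set G) := by
  have hxP : zpowers x = P := by
    have hdvd : orderOf x ∣ p := hP ▸ Nat.card_zpowers x ▸ card_dvd_of_le (zpowers_le.mpr hx)
    refine eq_of_le_of_card_ge (zpowers_le.mpr hx) ?_
    rw [hP, Nat.card_zpowers,
      ((Nat.dvd_prime Fact.out).mp hdvd).resolve_left (mt orderOf_eq_one_iff.mp hx1)]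
  intro y hy
  set M := closure {x, y}
  have : Group.IsSolvable M := hy
  have hxM : x ∈ M := subset_closure (by simp)
  have hPM : (P : Subgroup G) ≤ M := hxP ▸ zpowers_le.mpr hxM
  have hindex : ((P.subtype hPM : Sylow p M) : Subgroup M).index < p := by
    have hmul := card_mul_index ((P.subtype hPM : Sylow p M) : Subgroup M)
    have hM : Nat.card M ≤ p ^ 2 := (card_le_card_sol hxM).trans hSol
    rw [P.coe_subtype, Nat.card_congr (subgroupOfEquivOfLe hPM).toEquiv, hP] at hmul
    have hle : (P.subgroupOf M).index ≤ p := by nlinarith [(Fact.out : p.Prime).pos]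
    refine hle.lt_of_ne fun h ↦ (P.subtype hPM).not_dvd_index ?_
    rw [P.coe_subtype, h]
  have := (P.subtype hPM).normal_of_index_lt hindex
  rw [P.coe_subtype] at this
  exact le_normalizer_of_normal_subgroupOf hPM (subset_closure (by simp))

end Sylow

theorem stmt10 {G : Type*} [Group G] [Finite G] (hG : ¬ IsSolvable G) (x : G) :
    ∀ p : ℕ, p.Prime → Nat.card (Sol x) ≠ p ^ 2 := by
  intro p hp hcard
  have := Fact.mk hp
  have hGcard : Nat.card G ≠ p ^ 2 := fun h ↦
    hG (have := (IsPGroup.of_card h).isNilpotent; (inferInstance : Group.IsSolvable G))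
  rcases eq_or_ne x 1 with rfl | hx1
  · exact hGcard (by rw [← hcard, sol_one, Nat.card_univ])
  obtain ⟨k, -, hk⟩ := (Nat.dvd_prime_pow hp).mp (hcard ▸ orderOf_dvd_card_sol x)
  obtain ⟨P, hxP⟩ := (IsPGroup.of_card ((Nat.card_zpowers x).trans hk)).exists_le_sylow
  replace hxP : x ∈ P := hxP (mem_zpowers x)
  obtain ⟨n, hn⟩ := IsPGroup.iff_card.mp P.isPGroup'
  have hn2 : n ≤ 2 :=
    (Nat.pow_le_pow_iff_right hp.one_lt).mp (hn ▸ hcard ▸ card_le_card_sol hxP)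
  interval_cases n
  · exact hx1 ((card_eq_one.mp hn).le hxP)
  · have hSol : Sol x = normalizer (P : Set G) :=
      (P.sol_subset_normalizer (hn.trans (pow_one p)) hxP hx1 hcard.le).antisymm
        fun _ ↦ mem_sol_of_mem_normalizer hxP
    have hdvd : p ^ 2 ∣ Nat.card P :=
      P.pow_dvd_card_of_pow_dvd_card (hcard ▸ hSol ▸ card_subgroup_dvd_card _)
    rw [hn, Nat.pow_dvd_pow_iff_le_right hp.one_lt] at hdvd
    omega
  · have := IsPGroup.isMulCommutative_of_card_eq_prime_sq hn
    have hSol : Sol x ⊆ P := ((Set.toFinite _).eq_of_subset_of_card_le (coe_subset_sol hxP)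
      (by rw [hcard, ← hn]; rfl)).ge
    exact hGcard (by rw [← card_top, ← P.eq_top_of_sol_subset hxP hSol, hn])
end
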